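/- Let G be a finite vertex-transitive graph and A an independent set of G with |A|·|V(G)| = α(G)·|N[A]|. Then the complement of N[A] in V(G), denoted N̄[A], satisfies: for every maximum independent set S of G, |S ∩ N̄[A]| = α(G) − |A|. -/

import Mathlib

open Finset SimpleGraph

variable {α β : Type*}

/-- The direct (tensor) product of two simple graphs. -/
def tensorProd (G : SimpleGraph α) (H : SimpleGraph β) : SimpleGraph (α × β) where
  Adj x y := G.Adj x.1 y.1 ∧ H.Adj x.2 y.2
  symm := ⟨fun _ _ h => ⟨h.1.symm, h.2.symm⟩⟩
  loopless := ⟨fun x h => G.loopless.irrefl x.1 h.1⟩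

/-- A set of vertices is independent iff it is a clique in the complement. -/
def IsIndepSet (G : SimpleGraph α) (s : Set α) : Prop := Gᶜ.IsClique s

/-- The independence number: the clique number of the complement. -/
noncomputable def indepNum (G : SimpleGraph α) : ℕ := Gᶜ.cliqueNum

/-- A graph is vertex-transitive if its automorphism group acts transitively. -/
def VertexTransitive (G : SimpleGraph α) : Prop := ∀ u v : α, ∃ φ : G ≃g G, φ u = v

/-- The closed neighborhood of a set of vertices. -/
def closedNbhd (G : SimpleGraph α) (A : Set α) : Set α :=
  A ∪ {b | ∃ a ∈ A, G.Adj a b}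

/-! Let `Γ = Aut G`, which acts transitively on the `n` vertices. Counting the pairs `(φ, v)` with
`v ∈ N[A]` and `φ v ∈ S` in two ways gives `∑_φ |φ⁻¹ S ∩ N[A]| = |Γ| · |N[A]| · α(G) / n`, which the
hypothesis turns into `|Γ| · |A|`. Each `φ⁻¹ S` is a maximum independent set, and exchanging its part
inside `N[A]` for `A` keeps it independent, so every term is at least `|A|`. Hence every term, in
particular `|S ∩ N[A]|`, equals `|A|`. -/

section TransitiveAction

variable {Γ X : Type*} [Group Γ] [MulAction Γ X] [Fintype Γ] [DecidableEq X]
  [MulAction.IsPretransitive Γ X]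

lemma card_filter_smul_mem_eq (S : Finset X) (v w : X) :
    #{g : Γ | g • v ∈ S} = #{g : Γ | g • w ∈ S} := by
  obtain ⟨h, rfl⟩ := MulAction.exists_smul_eq Γ w v
  exact card_equiv (Equiv.mulRight h) fun g => by simp [mul_smul]

lemma card_mul_card_filter_smul_mem [Fintype X] (S : Finset X) (v : X) :
    Fintype.card X * #{g : Γ | g • v ∈ S} = #S * Fintype.card Γ := by
  have hfiber (g : Γ) : #{w | g • w ∈ S} = #S :=
    card_equiv (MulAction.toPerm g) fun w => by simp
  calc Fintype.card X * #{g : Γ | g • v ∈ S}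
      = ∑ w, #{g : Γ | g • w ∈ S} := by
        simp [card_filter_smul_mem_eq S _ v]
    _ = ∑ g : Γ, #{w | g • w ∈ S} :=
        sum_card_bipartiteAbove_eq_sum_card_bipartiteBelow (fun w (g : Γ) => g • w ∈ S)
    _ = #S * Fintype.card Γ := by simp [hfiber, mul_comm]

lemma card_mul_sum_card_filter_smul_mem [Fintype X] (N S : Finset X) :
    Fintype.card X * ∑ g : Γ, #{v ∈ N | g • v ∈ S} = #N * #S * Fintype.card Γ := by
  have hswap : ∑ g : Γ, #{v ∈ N | g • v ∈ S} = ∑ v ∈ N, #{g : Γ | g • v ∈ S} :=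
    sum_card_bipartiteAbove_eq_sum_card_bipartiteBelow (fun (g : Γ) v => g • v ∈ S)
  simp only [hswap, mul_sum, card_mul_card_filter_smul_mem, sum_const, smul_eq_mul, mul_assoc]

end TransitiveAction

lemma IsIndepSet.ncard_le_indepNum [Finite α] {G : SimpleGraph α} {s : Set α}
    (h : _root_.IsIndepSet G s) : s.ncard ≤ _root_.indepNum G := by
  have := Fintype.ofFinite α
  classical
  rw [Set.ncard_eq_toFinset_card']
  exact IsClique.card_le_cliqueNum (tc := by rwa [Set.coe_toFinset])

lemma IsIndepSet.preimage {G : SimpleGraph α} {H : SimpleGraph β} {s : Set β}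
    (h : _root_.IsIndepSet H s) (f : G →g H) : _root_.IsIndepSet G (f ⁻¹' s) := by
  intro x hx y hy hxy
  refine ⟨hxy, fun hadj => ?_⟩
  exact (h hx hy (f.map_adj hadj).ne).2 (f.map_adj hadj)

lemma IsIndepSet.sdiff_closedNbhd_union {G : SimpleGraph α} {A T : Set α}
    (hT : _root_.IsIndepSet G T) (hA : _root_.IsIndepSet G A) :
    _root_.IsIndepSet G (T \ closedNbhd G A ∪ A) := by
  rintro x (⟨hxT, hxN⟩ | hxA) y (⟨hyT, hyN⟩ | hyA) hxy <;> refine ⟨hxy, fun hadj => ?_⟩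
  · exact (hT hxT hyT hxy).2 hadj
  · exact hxN (Or.inr ⟨y, hyA, hadj.symm⟩)
  · exact hyN (Or.inr ⟨x, hxA, hadj⟩)
  · exact (hA hxA hyA hxy).2 hadj

lemma ncard_le_ncard_inter_closedNbhd [Finite α] {G : SimpleGraph α} {A T : Set α}
    (hA : _root_.IsIndepSet G A) (hT : _root_.IsIndepSet G T)
    (hTcard : T.ncard = _root_.indepNum G) :
    A.ncard ≤ (T ∩ closedNbhd G A).ncard := by
  have hle := (hT.sdiff_closedNbhd_union hA).ncard_le_indepNum
  have hdisj : Disjoint (T \ closedNbhd G A) A :=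
    Set.disjoint_left.2 fun _ hx hxA => hx.2 (Or.inl hxA)
  rw [Set.ncard_union_eq hdisj, ← hTcard, ← Set.ncard_inter_add_ncard_sdiff_eq_ncard T
    (closedNbhd G A)] at hle
  omega

lemma card_filter_mem_eq_ncard_inter_preimage [DecidableEq β] (f : α → β) (N : Finset α)
    (S : Finset β) : #{v ∈ N | f v ∈ S} = ((N : Set α) ∩ f ⁻¹' S).ncard := by
  rw [← Set.ncard_coe_finset, coe_filter]
  rfl

theorem ncard_inter_closedNbhd_eq [Fintype α] {G : SimpleGraph α} (hG : VertexTransitive G)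
    {A : Set α} (hA : _root_.IsIndepSet G A)
    (heq : A.ncard * Fintype.card α = _root_.indepNum G * (closedNbhd G A).ncard)
    {S : Set α} (hS : _root_.IsIndepSet G S) (hScard : S.ncard = _root_.indepNum G) :
    (S ∩ closedNbhd G A).ncard = A.ncard := by
  classical
  obtain hα | hα := isEmpty_or_nonempty α
  · simp [Set.eq_empty_of_isEmpty S, Set.eq_empty_of_isEmpty A]
  have _ : Finite (G ≃g G) := DFunLike.finite _
  have _ : Fintype (G ≃g G) := Fintype.ofFinite _
  have _ : MulAction.IsPretransitive (G ≃g G) α := ⟨hG⟩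
  set N := (closedNbhd G A).toFinset
  have hle (φ : G ≃g G) : A.ncard ≤ #{v ∈ N | φ • v ∈ S.toFinset} := by
    rw [card_filter_mem_eq_ncard_inter_preimage, Set.coe_toFinset, Set.coe_toFinset,
      Set.inter_comm]
    exact ncard_le_ncard_inter_closedNbhd hA (hS.preimage φ.toHom)
      ((Set.ncard_preimage_of_injective_subset_range φ.injective (by simp)).trans hScard)
  have hsum : ∑ φ : G ≃g G, A.ncard = ∑ φ : G ≃g G, #{v ∈ N | φ • v ∈ S.toFinset} := by
    refine Nat.eq_of_mul_eq_mul_left (Fintype.card_pos (α := α)) ?_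
    rw [card_mul_sum_card_filter_smul_mem, sum_const, card_univ, smul_eq_mul,
      ← Set.ncard_eq_toFinset_card', ← Set.ncard_eq_toFinset_card', hScard]
    linear_combination (Fintype.card (G ≃g G)) * heq
  have hone := (sum_eq_sum_iff_of_le fun φ _ => hle φ).1 hsum 1 (mem_univ _)
  rw [hone, card_filter_mem_eq_ncard_inter_preimage, Set.coe_toFinset, Set.coe_toFinset,
    Set.inter_comm]
  rfl

theorem stmt18 [Fintype α] (G : SimpleGraph α) (hG : VertexTransitive G)
    (A : Set α) (hA : _root_.IsIndepSet G A)
    (heq : A.ncard * Fintype.card α = _root_.indepNum G * (closedNbhd G A).ncard) :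
    ∀ S : Set α, _root_.IsIndepSet G S → S.ncard = _root_.indepNum G →
      (S ∩ (Set.univ \ closedNbhd G A)).ncard = _root_.indepNum G - A.ncard := by
  intro S hS hScard
  have hinter := ncard_inter_closedNbhd_eq hG hA heq hS hScard
  have hsplit := Set.ncard_inter_add_ncard_sdiff_eq_ncard S (closedNbhd G A)
  rw [← Set.inter_sdiff_assoc, Set.inter_univ]
  omega
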